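/- Let G be a JCI-DMG. If G satisfies JCI Assumption 1, then every acyclification of G satisfies JCI Assumption 1. If G satisfies JCI Assumptions 1 and 2, then every acyclification of G satisfies JCI Assumptions 1 and 2. If G satisfies JCI Assumptions 1, 2 and 3, then every acyclification of G satisfies JCI Assumptions 1, 2 and 3. -/
import Mathlib


namespace CausalGraphs

variable {V : Type*}

/-- A directed mixed graph (DMG): directed edges `dir` (`i → j`) and
bidirected edges `bi` (`i ↔ j`), with no self-loops. -/
structure DMG (V : Type*) where
  dir : V → V → Prop
  bi : V → V → Prop
  dir_irrefl : ∀ i, ¬ dir i i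
  bi_irrefl : ∀ i, ¬ bi i i

namespace DMG

/-- `G.Anc i j`: `i ∈ an(G, j)`, i.e. there is a (possibly trivial) directed path
from `i` to `j` in `G`. -/
def Anc (G : DMG V) (i j : V) : Prop :=
  Relation.ReflTransGen G.dir i j

/-- `G.Scc i j`: `i ∈ scc(G, j)`, i.e. `i` and `j` lie in the same strongly
connected component of `G`. -/
def Scc (G : DMG V) (i j : V) : Prop :=
  G.Anc i j ∧ G.Anc j i

/-- There is a bidirected edge between `i` and `j` (bidirected edges are unordered). -/
def BiEdge (G : DMG V) (i j : V) : Prop :=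
  G.bi i j ∨ G.bi j i

/-- `G` has no directed cycle (i.e. `G` is an ADMG). -/
def Acyclic (G : DMG V) : Prop :=
  ∀ i j, G.dir i j → ¬ G.Anc j i

end DMG

/-- A walk of length `len` is recorded by its vertices `vert 0, …, vert len` and,
for each edge index `k < len`, the edge marks: `intoL k` (resp. `intoR k`) is `true`
iff the `k`-th edge has an arrowhead at `vert k` (resp. at `vert (k+1)`). -/
structure Walk (V : Type*) where
  len : ℕ
  vert : ℕ → V
  intoL : ℕ → Bool
  intoR : ℕ → Bool

namespace Walk

def first (w : Walk V) : V := w.vert 0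

def last (w : Walk V) : V := w.vert w.len

/-- The walk is an actual walk in a DMG `G`: each step traverses a directed edge
(in either direction) or a bidirected edge of `G`, with the corresponding marks. -/
def ValidOn (G : DMG V) (w : Walk V) : Prop :=
  ∀ k, k < w.len →
    (w.intoL k = false ∧ w.intoR k = true ∧ G.dir (w.vert k) (w.vert (k+1))) ∨
    (w.intoL k = true ∧ w.intoR k = false ∧ G.dir (w.vert (k+1)) (w.vert k)) ∨
    (w.intoL k = true ∧ w.intoR k = true ∧ G.BiEdge (w.vert k) (w.vert (k+1)))

/-- `k` is a non-endpoint position of the walk. -/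
def Interior (w : Walk V) (k : ℕ) : Prop := 0 < k ∧ k < w.len

/-- The non-endpoint node `vert k` is a collider on the walk: both adjacent
edges have an arrowhead at it. -/
def ColliderAt (w : Walk V) (k : ℕ) : Prop :=
  w.Interior k ∧ w.intoR (k-1) = true ∧ w.intoL k = true

/-- The non-endpoint node `vert k` is a non-collider on the walk. -/
def NonColliderAt (w : Walk V) (k : ℕ) : Prop :=
  w.Interior k ∧ ¬ (w.intoR (k-1) = true ∧ w.intoL k = true)

/-- The edge on the first-endpoint side of position `k` is directed out of
`vert k`, pointing to the neighbour `vert (k-1)` on the walk. -/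
def PointsLeft (w : Walk V) (k : ℕ) : Prop :=
  w.intoL (k-1) = true ∧ w.intoR (k-1) = false

/-- The edge on the last-endpoint side of position `k` is directed out of
`vert k`, pointing to the neighbour `vert (k+1)` on the walk. -/
def PointsRight (w : Walk V) (k : ℕ) : Prop :=
  w.intoL k = false ∧ w.intoR k = true

/-- The walk is a path: all its vertices are distinct. -/
def IsPath (w : Walk V) : Prop :=
  ∀ a, a ≤ w.len → ∀ b, b ≤ w.len → w.vert a = w.vert b → a = b

/-- The walk is into its first node (arrowhead at the first node). -/
def IntoFirst (w : Walk V) : Prop := 0 < w.len ∧ w.intoL 0 = true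

/-- The walk is into its last node (arrowhead at the last node). -/
def IntoLast (w : Walk V) : Prop := 0 < w.len ∧ w.intoR (w.len - 1) = true

/-- The walk is σ-blocked by the set `C`. -/
def SigmaBlocked (G : DMG V) (w : Walk V) (C : Set V) : Prop :=
  w.first ∈ C ∨ w.last ∈ C ∨
  (∃ k, w.ColliderAt k ∧ ¬ ∃ c ∈ C, G.Anc (w.vert k) c) ∨
  (∃ k, w.NonColliderAt k ∧ w.vert k ∈ C ∧
    ((w.PointsLeft k ∧ ¬ G.Scc (w.vert k) (w.vert (k-1))) ∨
     (w.PointsRight k ∧ ¬ G.Scc (w.vert k) (w.vert (k+1)))))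

/-- The walk is d-blocked by the set `C`. -/
def DBlocked (G : DMG V) (w : Walk V) (C : Set V) : Prop :=
  w.first ∈ C ∨ w.last ∈ C ∨
  (∃ k, w.ColliderAt k ∧ ¬ ∃ c ∈ C, G.Anc (w.vert k) c) ∨
  (∃ k, w.NonColliderAt k ∧ w.vert k ∈ C)

/-- The walk is inducing: every collider on it is an ancestor of one of the two
endpoints, and every non-endpoint non-collider only has outgoing directed edges
to its neighbours on the walk that lie in the same strongly connected component. -/
def Inducing (G : DMG V) (w : Walk V) : Prop :=
  (∀ k, w.ColliderAt k → G.Anc (w.vert k) w.first ∨ G.Anc (w.vert k) w.last) ∧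
  (∀ k, w.NonColliderAt k →
    (w.PointsLeft k → G.Scc (w.vert k) (w.vert (k-1))) ∧
    (w.PointsRight k → G.Scc (w.vert k) (w.vert (k+1))))

end Walk

namespace DMG

/-- `A` and `B` are σ-separated given `C` in `G`. -/
def SigmaSep (G : DMG V) (A B C : Set V) : Prop :=
  ∀ w : Walk V, w.ValidOn G → w.first ∈ A → w.last ∈ B → w.SigmaBlocked G C

/-- `A` and `B` are d-separated given `C` in `G`. -/
def DSep (G : DMG V) (A B C : Set V) : Prop :=
  ∀ w : Walk V, w.ValidOn G → w.first ∈ A → w.last ∈ B → w.DBlocked G C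

/-- Nodes `i` and `j` are σ-connected given `C` in `G`. -/
def SigmaConnected (G : DMG V) (i j : V) (C : Set V) : Prop :=
  ∃ w : Walk V, w.ValidOn G ∧ w.first = i ∧ w.last = j ∧ ¬ w.SigmaBlocked G C

/-- The σ-independence model of `G`. -/
def IMsigma (G : DMG V) : Set (Set V × Set V × Set V) :=
  { t | G.SigmaSep t.1 t.2.1 t.2.2 }

/-- The d-independence model of `G`. -/
def IMd (G : DMG V) : Set (Set V × Set V × Set V) :=
  { t | G.DSep t.1 t.2.1 t.2.2 }

/-- There is an inducing walk between `i` and `j` in `G`. -/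
def InducingWalk (G : DMG V) (i j : V) : Prop :=
  ∃ w : Walk V, w.ValidOn G ∧ w.first = i ∧ w.last = j ∧ w.Inducing G

/-- There is an inducing path between `i` and `j` in `G`. -/
def InducingPath (G : DMG V) (i j : V) : Prop :=
  ∃ w : Walk V, w.ValidOn G ∧ w.first = i ∧ w.last = j ∧ w.IsPath ∧ w.Inducing G

/-- There is an inducing walk between `i` and `j` in `G` that is into `j`. -/
def InducingWalkIntoLast (G : DMG V) (i j : V) : Prop :=
  ∃ w : Walk V, w.ValidOn G ∧ w.first = i ∧ w.last = j ∧ w.Inducing G ∧ w.IntoLast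

/-- There is an inducing walk between `i` and `j` in `G` that is into both `i` and `j`. -/
def InducingWalkIntoBoth (G : DMG V) (i j : V) : Prop :=
  ∃ w : Walk V, w.ValidOn G ∧ w.first = i ∧ w.last = j ∧ w.Inducing G ∧ w.IntoFirst ∧ w.IntoLast

/-- `G'` is an acyclification of `G`. -/
def IsAcyclification (G G' : DMG V) : Prop :=
  G'.Acyclic ∧
  (∀ i j, ¬ G.Scc i j →
    ((G'.dir i j ↔ ∃ k, G.Scc k j ∧ G.dir i k) ∧
     (G'.bi i j ↔ ∃ k, G.Scc k j ∧ G.bi i k))) ∧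
  (∀ i j, i ≠ j → G.Scc i j → (G'.dir i j ∨ G'.dir j i ∨ G'.bi i j))

end DMG

/-- Edge marks of a partial ancestral graph. -/
inductive Mark : Type
  | tail
  | arrow
  | circle
deriving DecidableEq

/-- A directed partial ancestral graph (DPAG). `mark i j` is the edge mark at `j`
on the edge between `i` and `j` (only meaningful when `adj i j`). Allowed edge
types are `→`, `←`, `↔`, `∘→`, `←∘` and `∘—∘`; there are no directed and no
almost directed cycles. -/
structure DPAG (V : Type*) where
  adj : V → V → Prop
  mark : V → V → Mark
  adj_symm : ∀ i j, adj i j → adj j i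
  adj_irrefl : ∀ i, ¬ adj i i
  tail_imp_arrow : ∀ i j, adj i j → mark j i = Mark.tail → mark i j = Mark.arrow
  no_directed_cycle : ∀ i, ¬ Relation.TransGen
    (fun a b => adj a b ∧ mark a b = Mark.arrow ∧ mark b a = Mark.tail) i i
  no_almost_directed_cycle : ∀ i j, Relation.ReflTransGen
    (fun a b => adj a b ∧ mark a b = Mark.arrow ∧ mark b a = Mark.tail) i j →
    ¬ (adj i j ∧ mark i j = Mark.arrow ∧ mark j i = Mark.arrow)

/-- A directed edge `i → j` with respect to raw adjacency/mark data. -/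
def DirEdgeOn (adj : V → V → Prop) (mark : V → V → Mark) (i j : V) : Prop :=
  adj i j ∧ mark i j = Mark.arrow ∧ mark j i = Mark.tail

/-- The directed edge `i → j` is definitely visible, with respect to raw
adjacency/mark data: there is a node `k` not adjacent to `j` such that either
the edge between `k` and `i` is into `i`, or there is a path between `k` and `i`
that is into `i` on which every non-endpoint node is a collider and a parent of `j`. -/
def DefinitelyVisibleOn (adj : V → V → Prop) (mark : V → V → Mark) (i j : V) : Prop :=
  DirEdgeOn adj mark i j ∧
  ∃ k, ¬ adj k j ∧
    ((adj k i ∧ mark k i = Mark.arrow) ∨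
     (∃ n, ∃ p : ℕ → V, 0 < n ∧ p 0 = k ∧ p n = i ∧
       (∀ a, a ≤ n → ∀ b, b ≤ n → p a = p b → a = b) ∧
       (∀ m, m < n → adj (p m) (p (m+1))) ∧
       mark (p (n-1)) i = Mark.arrow ∧
       (∀ m, 0 < m → m < n →
         (mark (p (m-1)) (p m) = Mark.arrow ∧ mark (p (m+1)) (p m) = Mark.arrow) ∧
         DirEdgeOn adj mark (p m) j)))

namespace DPAG

/-- `i → j` in `P`. -/
def DirEdge (P : DPAG V) (i j : V) : Prop := DirEdgeOn P.adj P.mark i j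

/-- `i ↔ j` in `P`. -/
def BiEdge (P : DPAG V) (i j : V) : Prop :=
  P.adj i j ∧ P.mark i j = Mark.arrow ∧ P.mark j i = Mark.arrow

/-- `i *→ j` in `P`: an edge between `i` and `j` with an arrowhead at `j`. -/
def ArrowAt (P : DPAG V) (i j : V) : Prop := P.adj i j ∧ P.mark i j = Mark.arrow

/-- The directed edge `i → j` of `P` is definitely visible in `P`. -/
def DefinitelyVisible (P : DPAG V) (i j : V) : Prop :=
  DefinitelyVisibleOn P.adj P.mark i j

/-- The DPAG `P` contains the DMG `G`. -/
def Contains (P : DPAG V) (G : DMG V) : Prop :=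
  (∀ i j, i ≠ j → (P.adj i j ↔ G.InducingPath i j)) ∧
  (∀ i j, P.ArrowAt i j → ¬ G.Anc j i) ∧
  (∀ i j, P.DirEdge i j → G.Anc i j)

/-- `p 0, …, p n` is a possibly directed path in `P`: consecutive vertices are
adjacent, no edge has an arrowhead at the endpoint nearer `p 0`, and all
vertices are distinct. -/
def PossiblyDirectedPathOn (P : DPAG V) (n : ℕ) (p : ℕ → V) : Prop :=
  (∀ k, k < n → P.adj (p k) (p (k+1)) ∧ P.mark (p (k+1)) (p k) ≠ Mark.arrow) ∧
  (∀ a, a ≤ n → ∀ b, b ≤ n → p a = p b → a = b)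

/-- The path `p 0, …, p n` is uncovered: every consecutive triple is unshielded. -/
def UncoveredOn (P : DPAG V) (n : ℕ) (p : ℕ → V) : Prop :=
  ∀ k, k + 2 ≤ n → ¬ P.adj (p k) (p (k+2))

/-- There is a possibly directed path from `i` to `j` in `P`. -/
def PDPath (P : DPAG V) (i j : V) : Prop :=
  ∃ n, ∃ p : ℕ → V, p 0 = i ∧ p n = j ∧ P.PossiblyDirectedPathOn n p

end DPAG

/-- JCI Assumption 1 (exogeneity): no system variable causes any context variable
(`K` is the set of context nodes; its complement is the set of system nodes). -/
def JCI1 (G : DMG V) (K : Set V) : Prop :=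
  ∀ i k, i ∉ K → k ∈ K → ¬ G.dir i k

/-- JCI Assumption 2 (randomization): no pair of a system and a context variable
is confounded. -/
def JCI2 (G : DMG V) (K : Set V) : Prop :=
  ∀ i k, i ∉ K → k ∈ K → ¬ G.BiEdge i k

/-- JCI Assumption 3 (genericity): every pair of distinct context variables is
connected by a bidirected edge and by no directed edge. -/
def JCI3 (G : DMG V) (K : Set V) : Prop :=
  ∀ k k', k ∈ K → k' ∈ K → k ≠ k' → (G.bi k k' ∧ ¬ G.dir k k')

/-- An independence model on `V`: a set of triples of subsets of `V`. -/
abbrev IndepModel (V : Type*) := Set (Set V × Set V × Set V)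

/-- Background knowledge `Ψ` is compatible with the acyclification. -/
def CompatibleWithAcyclification (Ψ : DMG V → Prop) : Prop :=
  ∀ G : DMG V, Ψ G →
    (∃ G', G.IsAcyclification G' ∧ Ψ G') ∧
    (∀ i j : V, G.Anc i j → ∃ G', G.IsAcyclification G' ∧ Ψ G' ∧ G'.Anc i j) ∧
    (∀ i j : V, ¬ G.Anc i j → ∀ G', G.IsAcyclification G' → Ψ G' → ¬ G'.Anc i j)

/-- Under JCI1, any ancestor of a context node is a context node. -/
lemma anc_mem_of_jci1 {G : DMG V} {K : Set V} (h1 : JCI1 G K) {i k : V}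
    (ha : G.Anc i k) : k ∈ K → i ∈ K := by
  induction ha with
  | refl => exact id
  | tail _ step ih =>
    intro hc
    exact ih (by by_contra hb; exact h1 _ _ hb hc step)

/-- JCI Assumptions `{1}`, `{1,2}` and `{1,2,3}` are each preserved
by every acyclification of a JCI-DMG (with context nodes `K`). -/
theorem statement17 (G G' : DMG V) (K : Set V) (h : G.IsAcyclification G') :
    (JCI1 G K → JCI1 G' K) ∧
    (JCI1 G K ∧ JCI2 G K → JCI1 G' K ∧ JCI2 G' K) ∧
    (JCI1 G K ∧ JCI2 G K ∧ JCI3 G K → JCI1 G' K ∧ JCI2 G' K ∧ JCI3 G' K) := by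
  obtain ⟨hac, hedge, hsame⟩ := h
  have L1 : JCI1 G K → JCI1 G' K := by
    intro h1 i k hi hk hdir
    have hns : ¬ G.Scc i k := fun hs => hi (anc_mem_of_jci1 h1 hs.1 hk)
    obtain ⟨j, hj, hdirij⟩ := ((hedge i k hns).1).mp hdir
    exact h1 i j hi (anc_mem_of_jci1 h1 hj.1 hk) hdirij
  have L2 : JCI1 G K ∧ JCI2 G K → JCI1 G' K ∧ JCI2 G' K := by
    rintro ⟨h1, h2⟩
    refine ⟨L1 h1, ?_⟩
    intro i k hi hk hbi
    cases hbi with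
    | inl hb =>
      have hns : ¬ G.Scc i k := fun hs => hi (anc_mem_of_jci1 h1 hs.1 hk)
      obtain ⟨j, hj, hbij⟩ := ((hedge i k hns).2).mp hb
      exact h2 i j hi (anc_mem_of_jci1 h1 hj.1 hk) (Or.inl hbij)
    | inr hb =>
      have hns : ¬ G.Scc k i := fun hs => hi (anc_mem_of_jci1 h1 hs.2 hk)
      obtain ⟨j, hj, hbij⟩ := ((hedge k i hns).2).mp hb
      have hjK : j ∉ K := fun hjK => hi (anc_mem_of_jci1 h1 hj.2 hjK)
      exact h2 j k hjK hk (Or.inr hbij)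
  refine ⟨L1, L2, ?_⟩
  rintro ⟨h1, h2, h3⟩
  refine ⟨L1 h1, (L2 ⟨h1, h2⟩).2, ?_⟩
  have noanc : ∀ a b, a ∈ K → b ∈ K → a ≠ b → ¬ G.Anc a b := by
    intro a b ha hb hne hanc
    rcases Relation.ReflTransGen.cases_head hanc with heq | ⟨c, hac, hcb⟩
    · exact hne heq
    · have hcK : c ∈ K := anc_mem_of_jci1 h1 hcb hb
      have hnac : a ≠ c := fun h => G.dir_irrefl a (h ▸ hac)
      exact (h3 a c ha hcK hnac).2 hac
  intro k k' hk hk' hne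
  have hns : ¬ G.Scc k k' := fun hs => noanc k k' hk hk' hne hs.1
  have key : ∀ j, G.Scc j k' → j = k' := by
    intro j hj
    have hjK : j ∈ K := anc_mem_of_jci1 h1 hj.1 hk'
    by_contra hne'
    exact noanc j k' hjK hk' hne' hj.1
  constructor
  · exact ((hedge k k' hns).2).mpr
      ⟨k', ⟨Relation.ReflTransGen.refl, Relation.ReflTransGen.refl⟩,
        (h3 k k' hk hk' hne).1⟩
  · intro hdir
    obtain ⟨j, hj, hdirkj⟩ := ((hedge k k' hns).1).mp hdir
    have hjk' := key j hj
    subst hjk'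
    exact (h3 k j hk hk' hne).2 hdirkj

end CausalGraphs
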